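/- For n ≥ 6, the inequality (v_{n−1} − v_{n−2})x_{n−1} + (v_n − v_{n−2})x_n ≤ v_n v_{n−1} − v_{n−2}² holds for all circuits on values v_1 < ... < v_n. -/
import Mathlib


/-- A circuit on `{1,...,n}`: a permutation of `Fin n` that is a single `n`-cycle. -/
def IsCircuitPerm {n : ℕ} (σ : Equiv.Perm (Fin n)) : Prop :=
  σ.IsCycle ∧ σ.support = Finset.univ

/-- A circuit point on values `v`: `x i = v (σ i)` for some single-`n`-cycle permutation `σ`. -/
def IsCircuitPt {n : ℕ} (v : Fin n → ℝ) (x : Fin n → ℝ) : Prop :=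
  ∃ σ : Equiv.Perm (Fin n), IsCircuitPerm σ ∧ ∀ i, x i = v (σ i)

/-- For `n ≥ 6`, the inequality
`(v_{n−1} − v_{n−2})x_{n−1} + (v_n − v_{n−2})x_n ≤ v_n v_{n−1} − v_{n−2}²`
holds for all circuits. -/
theorem stmt_13 (n : ℕ) (hn : 6 ≤ n) (v : Fin n → ℝ)
    (hv0 : 0 ≤ v ⟨0, by omega⟩) (hv : StrictMono v) :
    ∀ x : Fin n → ℝ, IsCircuitPt v x →
      (v ⟨n - 2, by omega⟩ - v ⟨n - 3, by omega⟩) * x ⟨n - 2, by omega⟩ +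
        (v ⟨n - 1, by omega⟩ - v ⟨n - 3, by omega⟩) * x ⟨n - 1, by omega⟩ ≤
      v ⟨n - 1, by omega⟩ * v ⟨n - 2, by omega⟩ - v ⟨n - 3, by omega⟩ ^ 2 := by
  rintro x ⟨σ, ⟨hcyc, hsupp⟩, hx⟩
  set i1 : Fin n := ⟨n - 1, by omega⟩
  set i2 : Fin n := ⟨n - 2, by omega⟩
  set i3 : Fin n := ⟨n - 3, by omega⟩
  have hfix : ∀ i : Fin n, σ i ≠ i := by
    intro i
    have : i ∈ σ.support := by rw [hsupp]; exact Finset.mem_univ i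
    exact Equiv.Perm.mem_support.1 this
  -- no 2-cycle
  have hno2 : ¬ (σ i2 = i1 ∧ σ i1 = i2) := by
    rintro ⟨h1, h2⟩
    have hsq : (σ ^ 2) i2 = i2 := by
      simp [pow_two, Equiv.Perm.mul_apply, h1, h2]
    have : σ ^ 2 = 1 := (hcyc.pow_eq_one_iff' (hfix i2)).2 hsq
    have hord : orderOf σ = n := by
      rw [hcyc.orderOf, hsupp, Finset.card_univ, Fintype.card_fin]
    have : orderOf σ ∣ 2 := orderOf_dvd_of_pow_eq_one this
    rw [hord] at this
    have := Nat.le_of_dvd (by norm_num) this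
    omega
  -- monotonicity facts
  have hmono := hv.monotone
  have ha0 : 0 ≤ v i3 := le_trans hv0 (hmono (by simp [i3, Fin.le_def]))
  have h32 : v i3 < v i2 := hv (by simp [i3, i2, Fin.lt_def]; omega)
  have h21 : v i2 < v i1 := hv (by simp [i2, i1, Fin.lt_def]; omega)
  -- bounds on images
  have hval : ∀ i : Fin n, (σ i : ℕ) ≠ (i : ℕ) := fun i h => hfix i (Fin.ext h)
  have hb2 : v (σ i2) ≤ v i1 := hmono (by
    have : ((σ i2 : Fin n) : ℕ) < n := (σ i2).2
    simp [Fin.le_def, i1]; omega)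
  have hb1 : v (σ i1) ≤ v i2 := hmono (by
    have := hval i1
    have h2 : ((σ i1 : Fin n) : ℕ) < n := (σ i1).2
    simp only [Fin.le_def, i1, i2] at *
    omega)
  rw [hx i2, hx i1]
  by_cases hc : σ i2 = i1
  · -- then σ i1 ≠ i2, so σ i1 ≤ i3
    have hne : σ i1 ≠ i2 := fun h => hno2 ⟨hc, h⟩
    have hle : v (σ i1) ≤ v i3 := hmono (by
      have h1 := hval i1
      have h2 : ((σ i1 : Fin n) : ℕ) < n := (σ i1).2
      have h3 : ((σ i1 : Fin n) : ℕ) ≠ n - 2 := fun h => hne (Fin.ext h)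
      simp only [Fin.le_def, i1, i2, i3] at *
      omega)
    rw [hc]
    nlinarith [sub_nonneg.2 h32.le, sub_nonneg.2 (h32.trans h21).le]
  · -- σ i2 ≤ i3
    have hle : v (σ i2) ≤ v i3 := hmono (by
      have h1 := hval i2
      have h2 : ((σ i2 : Fin n) : ℕ) < n := (σ i2).2
      have h3 : ((σ i2 : Fin n) : ℕ) ≠ n - 1 := fun h => hc (Fin.ext h)
      simp only [Fin.le_def, i1, i2, i3] at *
      omega)
    nlinarith [sub_nonneg.2 h32.le, sub_nonneg.2 (h32.trans h21).le,
      sub_nonneg.2 hb1]
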